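/- For every coarsening parameter β > 1 and every n ≥ 2, setting q = 1 − 1/β ∈ (0,1), the n distinct points x_i = q^i (i = 0, …, n−1) on the real line, with spacing function Sp(x_i) defined as the distance from x_i to its nearest other point of the set, satisfy β(Sp(x_i) + Sp(x_j)) > |x_i − x_j| for every pair i ≠ j; hence the conflict graph G_C on these n points, whose edges are exactly the pairs violating the spacing condition, is the complete graph with n(n−1)/2 edges, of size quadratic in the number of vertices. -/

import Mathlib

/-!
For `0 < q < 1` consecutive powers are the closest, so the nearest-neighbour spacing of `q ^ i`
in `{q ^ k}` is at least `(1 - q) q ^ i = q ^ i / β`. Hence `β (Sp(q ^ i) + Sp(q ^ j)) ≥ q ^ i + q ^ j`,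
which exceeds `|q ^ i - q ^ j|` because both points are positive: every pair is in conflict.
-/

open scoped Classical

/-- Nearest-neighbor spacing function for a family of points `pts : Fin n → ℝ`:
the distance from `pts i` to its nearest other point of the family. -/
noncomputable def nnSp (n : ℕ) (pts : Fin n → ℝ) (i : Fin n) : ℝ :=
  sInf {r : ℝ | ∃ j : Fin n, j ≠ i ∧ r = dist (pts i) (pts j)}

section GeometricGaps

variable {q : ℝ}

lemma one_sub_mul_pow_le_pow_sub_pow (hq0 : 0 ≤ q) (hq1 : q ≤ 1) {a b : ℕ} (hab : a < b) :
    (1 - q) * q ^ a ≤ q ^ a - q ^ b := by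
  have hb : q ^ b ≤ q ^ (a + 1) := pow_le_pow_of_le_one hq0 hq1 hab
  rw [pow_succ] at hb
  linarith

lemma one_sub_mul_pow_le_dist_pow (hq0 : 0 ≤ q) (hq1 : q ≤ 1) {a b : ℕ} (hab : a ≠ b) :
    (1 - q) * q ^ a ≤ dist (q ^ a) (q ^ b) := by
  rw [Real.dist_eq]
  rcases hab.lt_or_gt with hab | hba
  · exact (one_sub_mul_pow_le_pow_sub_pow hq0 hq1 hab).trans (le_abs_self _)
  · have hgap := one_sub_mul_pow_le_pow_sub_pow hq0 hq1 hba
    have hpow : q ^ a ≤ q ^ b := pow_le_pow_of_le_one hq0 hq1 hba.le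
    have hsub : (1 - q) * q ^ a ≤ (1 - q) * q ^ b := by gcongr
    rw [abs_sub_comm]
    exact (hsub.trans hgap).trans (le_abs_self _)

end GeometricGaps

section NearestNeighbour

variable {n : ℕ}

lemma le_nnSp {pts : Fin n → ℝ} {i : Fin n} {c : ℝ} (hi : ∃ j, j ≠ i)
    (h : ∀ j, j ≠ i → c ≤ dist (pts i) (pts j)) : c ≤ nnSp n pts i := by
  obtain ⟨j, hj⟩ := hi
  refine le_csInf ⟨_, j, hj, rfl⟩ ?_
  rintro r ⟨k, hk, rfl⟩
  exact h k hk

variable {q : ℝ} {pts : Fin n → ℝ}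

lemma one_sub_mul_pow_le_nnSp (hq0 : 0 ≤ q) (hq1 : q ≤ 1) (hpts : ∀ k, pts k = q ^ (k : ℕ))
    {i j : Fin n} (hji : j ≠ i) : (1 - q) * q ^ (i : ℕ) ≤ nnSp n pts i :=
  le_nnSp ⟨j, hji⟩ fun k hk => by
    rw [hpts, hpts]
    exact one_sub_mul_pow_le_dist_pow hq0 hq1 (Fin.val_ne_of_ne hk.symm)

lemma dist_lt_mul_nnSp_add_of_eq_pow (hq0 : 0 < q) (hq1 : q ≤ 1)
    (hpts : ∀ k, pts k = q ^ (k : ℕ)) {β : ℝ} (hβq : β * (1 - q) = 1) {i j : Fin n}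
    (hij : i ≠ j) : dist (pts i) (pts j) < β * (nnSp n pts i + nnSp n pts j) := by
  have hβ : 0 ≤ β := by nlinarith
  have hpi := pow_pos hq0 (i : ℕ)
  have hpj := pow_pos hq0 (j : ℕ)
  calc dist (pts i) (pts j)
      < q ^ (i : ℕ) + q ^ (j : ℕ) := by
        rw [hpts, hpts, Real.dist_eq, abs_sub_lt_iff]
        constructor <;> linarith
    _ = β * ((1 - q) * q ^ (i : ℕ) + (1 - q) * q ^ (j : ℕ)) := by
        linear_combination (-(q ^ (i : ℕ)) - q ^ (j : ℕ)) * hβq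
    _ ≤ β * (nnSp n pts i + nnSp n pts j) := by
        gcongr
        · exact one_sub_mul_pow_le_nnSp hq0.le hq1 hpts hij.symm
        · exact one_sub_mul_pow_le_nnSp hq0.le hq1 hpts hij

end NearestNeighbour

lemma card_filter_sym2_of_forall_ne {α : Type*} [Fintype α] [DecidableEq α] (P : α → α → Prop)
    [DecidableRel P] (hP : ∀ i j, i ≠ j → P i j) :
    (Finset.univ.filter fun p : Sym2 α => ∃ i j : α, p = s(i, j) ∧ i ≠ j ∧ P i j).card
      = (Fintype.card α).choose 2 := by
  have hfilter : (Finset.univ.filter fun p : Sym2 α => ∃ i j : α, p = s(i, j) ∧ i ≠ j ∧ P i j)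
      = Finset.univ.filter fun p : Sym2 α => ¬ p.IsDiag := by
    refine Finset.filter_congr fun p _ => ?_
    induction p using Sym2.inductionOn with
    | hf a b =>
      rw [Sym2.mk_isDiag_iff]
      constructor
      · rintro ⟨i, j, hp, hij, -⟩
        rcases Sym2.eq_iff.mp hp with ⟨rfl, rfl⟩ | ⟨rfl, rfl⟩
        · exact hij
        · exact hij.symm
      · exact fun hab => ⟨a, b, rfl, hab, hP a b hab⟩
  rw [hfilter, ← Fintype.card_subtype, Sym2.card_subtype_not_diag]

theorem conflict_graph_quadratic_general (β : ℝ) (hβ : 1 < β) (n : ℕ)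
    (q : ℝ) (hq : q = 1 - 1 / β)
    (pts : Fin n → ℝ) (hpts : ∀ i : Fin n, pts i = q ^ (i : ℕ)) :
    Function.Injective pts ∧
    (∀ i j : Fin n, i ≠ j →
        β * (nnSp n pts i + nnSp n pts j) > dist (pts i) (pts j)) ∧
    (Finset.univ.filter fun p : Sym2 (Fin n) =>
        ∃ i j : Fin n, p = s(i, j) ∧ i ≠ j ∧
          β * (nnSp n pts i + nnSp n pts j) > dist (pts i) (pts j)).card
      = n * (n - 1) / 2 := by
  have hβ0 : 0 < β := one_pos.trans hβ
  have hq0 : 0 < q := by rw [hq, sub_pos, div_lt_one hβ0]; exact hβ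
  have hq1 : q < 1 := by rw [hq]; linarith [one_div_pos.mpr hβ0]
  have hβq : β * (1 - q) = 1 := by rw [hq]; field_simp; ring
  have hconflict : ∀ i j : Fin n, i ≠ j →
      β * (nnSp n pts i + nnSp n pts j) > dist (pts i) (pts j) :=
    fun _ _ hij => dist_lt_mul_nnSp_add_of_eq_pow hq0 hq1.le hpts hβq hij
  have hinj : Function.Injective pts := by
    rw [funext hpts]
    exact (pow_right_injective₀ hq0 hq1.ne).comp Fin.val_injective
  refine ⟨hinj, hconflict, ?_⟩
  -- the statement decides `∃ i : Fin n` by `Nat.decidableExistsFin`, the lemma by `Fintype`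
  convert card_filter_sym2_of_forall_ne _ hconflict using 3
  rw [Fintype.card_fin, Nat.choose_two_right]

/-- **The conflict graph can be quadratic in the number of vertices.**
For every coarsening parameter `β > 1` and every `n ≥ 2`, with `q = 1 - 1/β ∈ (0,1)`,
the `n` distinct points `x_i = q^i` (`i = 0, …, n-1`) on the real line, with nearest-neighbor
spacing function `Sp`, satisfy `β (Sp x_i + Sp x_j) > |x_i - x_j|` for every pair `i ≠ j`.
Hence the conflict graph `G_C` on these points, whose edges are exactly the pairs violating
the spacing condition, is the complete graph with `n (n-1) / 2` edges, of size quadratic in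
the number of vertices. -/
theorem conflict_graph_quadratic (β : ℝ) (hβ : 1 < β) (n : ℕ) (hn : 2 ≤ n)
    (q : ℝ) (hq : q = 1 - 1 / β)
    (pts : Fin n → ℝ) (hpts : ∀ i : Fin n, pts i = q ^ (i : ℕ)) :
    Function.Injective pts ∧
    (∀ i j : Fin n, i ≠ j →
        β * (nnSp n pts i + nnSp n pts j) > dist (pts i) (pts j)) ∧
    (Finset.univ.filter fun p : Sym2 (Fin n) =>
        ∃ i j : Fin n, p = s(i, j) ∧ i ≠ j ∧
          β * (nnSp n pts i + nnSp n pts j) > dist (pts i) (pts j)).card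
      = n * (n - 1) / 2 :=
  conflict_graph_quadratic_general β hβ n q hq pts hpts
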